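/- For any f : 𝔽_p^n → ℂ and any phase polynomial g of degree at most d taking values of modulus 1, the inner product satisfies |⟨f,g⟩| ≤ ‖f‖_{U^{d+1}}, where ⟨f,g⟩ = 𝔼_x f(x)·conj(g(x)). -/

import Mathlib

/-!
Write `h = f · ḡ`. Every `(d+1)`-dimensional cube product of `g` is an iterated multiplicative
derivative of `g`, hence `1`, so the cube products of `h` and `f` agree and
`‖h‖_{U^{d+1}} = ‖f‖_{U^{d+1}}`. It remains to see that `k ↦ ‖h‖_{U^k}` is monotone, starting from
`‖h‖_{U^0} = |𝔼 h|`. Splitting off one direction of the cube writes the `(k+1)`-st Gowers sum as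
`∑_{y ∈ G^k} |∑_x cube_k h y x|²`, and Cauchy–Schwarz over `y` bounds the square of the `k`-th
Gowers sum by `|G|^k` times this.
-/

/-- The `k`-th Gowers uniformity norm of `f : G → ℂ` on a finite abelian group `G`. -/
noncomputable def gowersNorm {G : Type} [AddCommGroup G] [Fintype G] [DecidableEq G]
    (k : ℕ) (f : G → ℂ) : ℝ :=
  (‖((∑ x : G, ∑ y : Fin k → G, ∏ S : Finset (Fin k),
      (fun z : ℂ => (starRingEnd ℂ) z)^[k - S.card] (f (x + ∑ i ∈ S, y i))) /
    (Fintype.card G : ℂ) ^ (k + 1))‖) ^ ((1 : ℝ) / 2 ^ k)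

/-- Multiplicative derivative in direction `y`: `(Δ̃_y f)(x) = f(x+y)·conj(f(x))`. -/
def mderiv {G : Type} [AddCommGroup G] (y : G) (f : G → ℂ) : G → ℂ :=
  fun x => f (x + y) * (starRingEnd ℂ) (f x)

/-- Iterated multiplicative derivatives along a list of directions. -/
def mderivs {G : Type} [AddCommGroup G] : List G → (G → ℂ) → (G → ℂ)
  | [], f => f
  | y :: ys, f => mderivs ys (mderiv y f)

/-- `f` is a phase polynomial of degree at most `d` if all `(d+1)`-fold multiplicative
derivatives of `f` are identically `1`. -/
def IsPhasePoly {G : Type} [AddCommGroup G] (d : ℕ) (f : G → ℂ) : Prop :=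
  ∀ ys : List G, ys.length = d + 1 → mderivs ys f = fun _ => 1

open Finset

lemma Fin.prod_univ_finset_succ {M : Type*} [CommMonoid M] (k : ℕ) (F : Finset (Fin (k + 1)) → M) :
    ∏ S, F S = ∏ T : Finset (Fin k), F (T.image succ) * F (insert 0 (T.image succ)) := by
  have hinj : Set.InjOn (image succ) (univ.powerset : Finset (Finset (Fin k))) :=
    fun _ _ _ _ h => image_injective (succ_injective k) h
  rw [← powerset_univ, Fin.univ_succ, cons_eq_insert, prod_powerset_insert (by simp),
    map_eq_image, Function.Embedding.coeFn_mk, powerset_image, prod_image hinj, prod_image hinj,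
    ← prod_mul_distrib, powerset_univ]

section GowersCube

variable {G : Type} [AddCommGroup G]

lemma conj_iterate_mul (m : ℕ) (a b : ℂ) :
    (fun z : ℂ => starRingEnd ℂ z)^[m] (a * b) =
      (fun z : ℂ => starRingEnd ℂ z)^[m] a * (fun z : ℂ => starRingEnd ℂ z)^[m] b :=
  map_mul (starRingEnd ℂ ^ m) a b

lemma conj_iterate_conj (m : ℕ) (a : ℂ) :
    (fun z : ℂ => starRingEnd ℂ z)^[m] (starRingEnd ℂ a) =
      starRingEnd ℂ ((fun z : ℂ => starRingEnd ℂ z)^[m] a) :=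
  (Function.iterate_succ_apply _ m a).symm.trans (Function.iterate_succ_apply' _ m a)

noncomputable def gowersCube (k : ℕ) (h : G → ℂ) (y : Fin k → G) (x : G) : ℂ :=
  ∏ S : Finset (Fin k), (fun z : ℂ => starRingEnd ℂ z)^[k - S.card] (h (x + ∑ i ∈ S, y i))

@[simp]
lemma gowersCube_zero (h : G → ℂ) (y : Fin 0 → G) (x : G) : gowersCube 0 h y x = h x := by
  simp [gowersCube, Subsingleton.elim _ (∅ : Finset (Fin 0))]

lemma gowersCube_mderiv (k : ℕ) (h : G → ℂ) (y : Fin k → G) (z : G) :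
    gowersCube k (mderiv z h) y = mderiv z (gowersCube k h y) := by
  ext x
  simp only [gowersCube, mderiv, map_prod, ← prod_mul_distrib, conj_iterate_mul, conj_iterate_conj,
    add_right_comm x z]

lemma gowersCube_cons (k : ℕ) (h : G → ℂ) (y : Fin k → G) (z x : G) :
    gowersCube (k + 1) h (Fin.cons z y) x = gowersCube k (mderiv z h) y x := by
  rw [gowersCube, Fin.prod_univ_finset_succ, gowersCube]
  refine prod_congr rfl fun T _ => ?_
  have hT : T.card ≤ k := by simpa using card_le_univ T
  have h0 : (0 : Fin (k + 1)) ∉ T.image Fin.succ := by simp [Fin.succ_ne_zero]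
  rw [sum_insert h0, card_insert_of_notMem h0, card_image_of_injective _ (Fin.succ_injective k),
    sum_image fun i _ j _ => Fin.succ_inj.1, Nat.add_sub_add_right, Nat.succ_sub hT,
    Function.iterate_succ_apply, ← conj_iterate_mul, mul_comm]
  simp only [Fin.cons_zero, Fin.cons_succ, mderiv, add_comm z, ← add_assoc]

lemma gowersCube_eq_mderivs (k : ℕ) (h : G → ℂ) (y : Fin k → G) :
    gowersCube k h y = mderivs (List.ofFn y) h := by
  induction k generalizing h with
  | zero => ext x; simp [mderivs]
  | succ k ih =>
    ext x
    rw [← Fin.cons_self_tail y, gowersCube_cons, ih, List.ofFn_succ]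
    rfl

lemma IsPhasePoly.gowersCube_eq_one {d : ℕ} {g : G → ℂ} (hg : IsPhasePoly d g)
    (y : Fin (d + 1) → G) : gowersCube (d + 1) g y = fun _ => 1 := by
  rw [gowersCube_eq_mderivs]
  exact hg _ List.length_ofFn

lemma gowersCube_mul_conj (k : ℕ) (f g : G → ℂ) (y : Fin k → G) (x : G) :
    gowersCube k (fun t => f t * starRingEnd ℂ (g t)) y x =
      gowersCube k f y x * starRingEnd ℂ (gowersCube k g y x) := by
  simp only [gowersCube, map_prod, ← prod_mul_distrib, conj_iterate_mul, conj_iterate_conj]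

variable [Fintype G]

lemma sum_sum_mderiv (φ : G → ℂ) : ∑ z, ∑ x, mderiv z φ x = (‖∑ x, φ x‖ : ℂ) ^ 2 := by
  have hshift (x : G) : ∑ z, φ (x + z) = ∑ w, φ w := Equiv.sum_comp (Equiv.addLeft x) φ
  simp only [mderiv]
  rw [sum_comm]
  simp only [← sum_mul, hshift]
  rw [← mul_sum, ← map_sum, Complex.mul_conj']

noncomputable def gowersSum (k : ℕ) (h : G → ℂ) : ℂ :=
  ∑ x, ∑ y : Fin k → G, gowersCube k h y x

lemma gowersSum_succ (k : ℕ) (h : G → ℂ) :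
    gowersSum (k + 1) h = ((∑ y : Fin k → G, ‖∑ x, gowersCube k h y x‖ ^ 2 : ℝ) : ℂ) := by
  rw [gowersSum, sum_comm, ← (Fin.consEquiv fun _ => G).sum_comp, Fintype.sum_prod_type, sum_comm]
  push_cast
  refine sum_congr rfl fun y _ => ?_
  rw [← sum_sum_mderiv]
  simp only [← gowersCube_mderiv, ← gowersCube_cons]
  rfl

lemma norm_gowersSum_succ (k : ℕ) (h : G → ℂ) :
    ‖gowersSum (k + 1) h‖ = ∑ y : Fin k → G, ‖∑ x, gowersCube k h y x‖ ^ 2 := by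
  rw [gowersSum_succ, Complex.norm_real, Real.norm_of_nonneg (by positivity)]

lemma sq_norm_gowersSum_le (k : ℕ) (h : G → ℂ) :
    ‖gowersSum k h‖ ^ 2 ≤ (Fintype.card G : ℝ) ^ k * ‖gowersSum (k + 1) h‖ := by
  rw [norm_gowersSum_succ, gowersSum, sum_comm]
  calc ‖∑ y : Fin k → G, ∑ x, gowersCube k h y x‖ ^ 2
      ≤ (∑ y : Fin k → G, ‖∑ x, gowersCube k h y x‖) ^ 2 := by gcongr; exact norm_sum_le _ _
    _ ≤ #(univ : Finset (Fin k → G)) * ∑ y : Fin k → G, ‖∑ x, gowersCube k h y x‖ ^ 2 :=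
        sq_sum_le_card_mul_sum_sq
    _ = _ := by simp

lemma sq_norm_gowersSum_div_le (k : ℕ) (h : G → ℂ) :
    ‖gowersSum k h / (Fintype.card G : ℂ) ^ (k + 1)‖ ^ 2 ≤
      ‖gowersSum (k + 1) h / (Fintype.card G : ℂ) ^ (k + 1 + 1)‖ := by
  set N := (Fintype.card G : ℝ)
  simp only [norm_div, norm_pow, Complex.norm_natCast]
  rw [div_pow, div_le_div_iff₀ (by positivity) (by positivity)]
  calc ‖gowersSum k h‖ ^ 2 * N ^ (k + 1 + 1)
      ≤ N ^ k * ‖gowersSum (k + 1) h‖ * N ^ (k + 1 + 1) := by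
        gcongr; exact sq_norm_gowersSum_le k h
    _ = ‖gowersSum (k + 1) h‖ * (N ^ (k + 1)) ^ 2 := by ring

variable [DecidableEq G]

lemma gowersNorm_eq (k : ℕ) (h : G → ℂ) :
    gowersNorm k h = ‖gowersSum k h / (Fintype.card G : ℂ) ^ (k + 1)‖ ^ ((1 : ℝ) / 2 ^ k) := rfl

lemma gowersNorm_le_gowersNorm_succ (k : ℕ) (h : G → ℂ) :
    gowersNorm k h ≤ gowersNorm (k + 1) h := by
  have hexp_k : (1 : ℝ) / 2 ^ k * 2 ^ (k + 1) = 2 := by rw [pow_succ]; field_simp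
  have hexp_succ : (1 : ℝ) / 2 ^ (k + 1) * 2 ^ (k + 1) = 1 := by field_simp
  rw [gowersNorm_eq, gowersNorm_eq, ← Real.rpow_le_rpow_iff (by positivity) (by positivity)
    (by positivity : (0 : ℝ) < 2 ^ (k + 1)), ← Real.rpow_mul (by positivity),
    ← Real.rpow_mul (by positivity), hexp_k, hexp_succ, Real.rpow_two, Real.rpow_one]
  exact sq_norm_gowersSum_div_le k h

lemma gowersNorm_monotone (h : G → ℂ) : Monotone (gowersNorm · h) :=
  monotone_nat_of_le_succ fun k => gowersNorm_le_gowersNorm_succ k h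

lemma gowersNorm_zero (h : G → ℂ) : gowersNorm 0 h = ‖(∑ x, h x) / Fintype.card G‖ := by
  simp [gowersNorm_eq, gowersSum]

lemma gowersNorm_mul_conj_of_isPhasePoly {d : ℕ} {g : G → ℂ} (hg : IsPhasePoly d g) (f : G → ℂ) :
    gowersNorm (d + 1) (fun x => f x * starRingEnd ℂ (g x)) = gowersNorm (d + 1) f := by
  simp only [gowersNorm_eq, gowersSum, gowersCube_mul_conj, hg.gowersCube_eq_one, map_one, mul_one]

end GowersCube

theorem abs_inner_le_gowersNorm_general {p n : ℕ} [Fact p.Prime] (d : ℕ)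
    (f g : (Fin n → ZMod p) → ℂ) (hg : IsPhasePoly d g) :
    ‖((∑ x : Fin n → ZMod p, f x * (starRingEnd ℂ) (g x)) /
      (Fintype.card (Fin n → ZMod p) : ℂ))‖ ≤ gowersNorm (d + 1) f :=
  calc _ = gowersNorm 0 (fun x => f x * starRingEnd ℂ (g x)) := (gowersNorm_zero _).symm
    _ ≤ gowersNorm (d + 1) (fun x => f x * starRingEnd ℂ (g x)) :=
        gowersNorm_monotone _ (Nat.zero_le _)
    _ = gowersNorm (d + 1) f := gowersNorm_mul_conj_of_isPhasePoly hg f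

/-- For any `f : 𝔽_p^n → ℂ` and any unimodular phase polynomial `g` of degree at most `d`,
`|⟨f,g⟩| ≤ ‖f‖_{U^{d+1}}`, where `⟨f,g⟩ = 𝔼_x f(x)·conj(g(x))`. -/
theorem abs_inner_le_gowersNorm {p n : ℕ} [Fact p.Prime] (d : ℕ)
    (f g : (Fin n → ZMod p) → ℂ) (hg : IsPhasePoly d g)
    (hmod : ∀ x, ‖g x‖ = 1) :
    ‖((∑ x : Fin n → ZMod p, f x * (starRingEnd ℂ) (g x)) /
      (Fintype.card (Fin n → ZMod p) : ℂ))‖ ≤ gowersNorm (d + 1) f :=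
  abs_inner_le_gowersNorm_general d f g hg
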